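/- arXiv:2102.08805 — 2 statements merged into one kernel-verified Lean document; each statement's English description precedes it below -/
import Mathlib

section
/- Let L φ = ∫_{-r}^0 dμ(θ) φ(θ) be a Riemann–Stieltjes integral operator with μ : [-r,0] → L(X) of bounded variation and total variation measure |μ|. Then for every τ > 0 and every u ∈ W^{2,p}([0,τ],X) with u(0) = 0, the input-output map (𝔽u)(t) = L(Φ_t u) satisfies ∫_0^τ ‖(𝔽u)(t)‖^p dt ≤ (|μ|([-τ,0]))^p ∫_0^τ ‖u(σ)‖^p dσ. -/
/-!
Hölder's inequality in `θ` bounds `‖(𝔽u)(t)‖ ^ p` by `|μ|([-τ,0]) ^ (p - 1)` times the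
`|μ|`-integral over `[-τ,0]` of `‖ũ (t + θ)‖ ^ p`, where `ũ` is `u` extended by zero outside
`[0,τ]`. Integrating in `t` and exchanging the order of integration, translation invariance of
Lebesgue measure turns each inner integral into `∫ ‖ũ‖ ^ p`, which yields one more factor
`|μ|([-τ,0])`.
-/

open MeasureTheory Set

section Holder

variable {α E : Type*} [MeasurableSpace α] [NormedAddCommGroup E] [NormedSpace ℝ E]
  {μ : Measure α} [IsFiniteMeasure μ]

theorem norm_integral_rpow_le_of_norm_le {p : ℝ} (hp : 1 < p) {g : α → E} {f : α → ℝ}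
    (hf : MemLp f (ENNReal.ofReal p) μ) (hgf : ∀ᵐ x ∂μ, ‖g x‖ ≤ f x) :
    ‖∫ x, g x ∂μ‖ ^ p ≤ μ.real univ ^ (p - 1) * ∫ x, f x ^ p ∂μ := by
  have hpq := Real.HolderConjugate.conjExponent hp
  have hf0 : 0 ≤ᵐ[μ] f := hgf.mono fun x hx => (norm_nonneg _).trans hx
  have hfp : 0 ≤ ∫ x, f x ^ p ∂μ :=
    integral_nonneg_of_ae <| hf0.mono fun x hx => Real.rpow_nonneg hx p
  have holder :
      ∫ x, f x ∂μ ≤ (∫ x, f x ^ p ∂μ) ^ (1 / p) * μ.real univ ^ (1 / p.conjExponent) := by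
    simpa using integral_mul_le_Lp_mul_Lq_of_nonneg hpq hf0 (ae_of_all _ fun _ => zero_le_one)
      hf (memLp_const 1)
  calc ‖∫ x, g x ∂μ‖ ^ p
      ≤ ((∫ x, f x ^ p ∂μ) ^ (1 / p) * μ.real univ ^ (1 / p.conjExponent)) ^ p := by
        gcongr
        exact (norm_integral_le_of_norm_le (hf.integrable (by simpa using hp.le)) hgf).trans holder
    _ = μ.real univ ^ (p - 1) * ∫ x, f x ^ p ∂μ := by
        rw [Real.mul_rpow (by positivity) (by positivity), ← Real.rpow_mul hfp,
          ← Real.rpow_mul measureReal_nonneg, one_div_mul_cancel hpq.ne_zero, Real.rpow_one,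
          one_div_mul_eq_div, hpq.div_conj_eq_sub_one, mul_comm]

end Holder

section Translation

variable {A E : Type*} [AddGroup A] [MeasurableSpace A] [MeasurableAdd₂ A] [NormedAddCommGroup E]
  {μ : Measure A} [SFinite μ] [μ.IsAddRightInvariant] {ν : Measure A} [IsFiniteMeasure ν]
  {f : A → E}

theorem integrable_prod_comp_add (hfm : StronglyMeasurable f) (hf : Integrable f μ) :
    Integrable (fun z : A × A => f (z.1 + z.2)) (μ.prod ν) := by
  refine (integrable_prod_iff' (hfm.comp_measurable measurable_add).aestronglyMeasurable).2
    ⟨ae_of_all _ fun y => hf.comp_add_right y, ?_⟩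
  simp only [Function.comp_apply, integral_add_right_eq_self fun x => ‖f x‖, integrable_const]

theorem integral_integral_comp_add [NormedSpace ℝ E] [CompleteSpace E]
    (hfm : StronglyMeasurable f) (hf : Integrable f μ) :
    ∫ x, ∫ y, f (x + y) ∂ν ∂μ = ν.real univ • ∫ x, f x ∂μ := by
  rw [integral_integral_swap (integrable_prod_comp_add hfm hf)]
  simp only [integral_add_right_eq_self f]
  exact integral_const _

end Translation

section Indicator

variable {α β : Type*} [TopologicalSpace α] {s : Set α}

theorem ContinuousOn.measurable_indicator [MeasurableSpace α] [OpensMeasurableSpace α]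
    [TopologicalSpace β] [MeasurableSpace β] [BorelSpace β] [Zero β] {f : α → β}
    (hf : ContinuousOn f s) (hs : MeasurableSet s) : Measurable (s.indicator f) := by
  classical
  rw [← piecewise_eq_indicator]
  exact hf.measurable_piecewise continuousOn_const hs

theorem IsCompact.exists_bound_indicator_of_continuousOn [SeminormedAddCommGroup β] {f : α → β}
    (hs : IsCompact s) (hf : ContinuousOn f s) : ∃ M, ∀ x, ‖s.indicator f x‖ ≤ M := by
  obtain ⟨M, hM⟩ := hs.exists_bound_of_continuousOn hf
  refine ⟨max M 0, fun x => ?_⟩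
  by_cases hx : x ∈ s
  · rw [indicator_of_mem hx]
    exact le_max_of_le_left (hM x hx)
  · rw [indicator_of_notMem hx, norm_zero]
    exact le_max_right M 0

end Indicator

section History

variable {X : Type*} [NormedAddCommGroup X] [NormedSpace ℝ X]

/-- The history segment `(Φ_t u)(θ)`. -/
noncomputable def history (u : ℝ → X) (t θ : ℝ) : X :=
  if -t ≤ θ then u (t + θ) else 0

theorem norm_integral_history_rpow_le {ν : Measure ℝ} [IsFiniteMeasure ν]
    (hν : ∀ᵐ θ ∂ν, θ ≤ 0) {k : ℝ → X →L[ℝ] X} (hk : ∀ θ, ‖k θ‖ ≤ 1) {p : ℝ} (hp : 1 < p)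
    {τ : ℝ} {u : ℝ → X} (hu : ContinuousOn u (Icc 0 τ)) {t : ℝ} (ht : t ≤ τ) :
    ‖∫ θ, k θ (history u t θ) ∂ν‖ ^ p ≤ ν.real (Icc (-τ) 0) ^ (p - 1) *
      ∫ θ in Icc (-τ) 0, (Icc 0 τ).indicator (fun σ => ‖u σ‖ ^ p) (t + θ) ∂ν := by
  set N := (Icc 0 τ).indicator fun σ => ‖u σ‖
  have hNm : Measurable N := hu.norm.measurable_indicator measurableSet_Icc
  obtain ⟨M, hM⟩ := isCompact_Icc.exists_bound_indicator_of_continuousOn hu.norm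
  have hsupp : ∀ᵐ θ ∂ν, θ ∉ Icc (-τ) 0 → k θ (history u t θ) = 0 := by
    filter_upwards [hν] with θ hθ hθS
    have hθt : θ < -t := by
      by_contra h
      exact hθS ⟨by linarith, hθ⟩
    rw [history, if_neg (not_le.2 hθt), map_zero]
  have hNp : (Icc 0 τ).indicator (fun σ => ‖u σ‖ ^ p) = fun σ => N σ ^ p :=
    indicator_comp_of_zero (g := fun y : ℝ => y ^ p) (Real.zero_rpow (by linarith))
  rw [← setIntegral_eq_integral_of_ae_compl_eq_zero hsupp, hNp,
    ← measureReal_restrict_apply_univ]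
  refine norm_integral_rpow_le_of_norm_le (f := fun θ => N (t + θ)) hp
    (MemLp.of_bound (hNm.comp (measurable_const_add t)).aestronglyMeasurable M
      (ae_of_all _ fun θ => hM (t + θ))) ?_
  filter_upwards [ae_restrict_mem measurableSet_Icc] with θ hθ
  refine ((k θ).le_of_opNorm_le (hk θ) _).trans ?_
  rw [one_mul, history]
  split_ifs with h
  · have hmem : t + θ ∈ Icc 0 τ := ⟨by linarith, by linarith [hθ.2]⟩
    simp only [N, indicator_of_mem hmem, le_refl]
  · exact norm_zero.trans_le (indicator_nonneg (fun _ _ => norm_nonneg _) _)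

end History

theorem input_output_estimate_general
    (X : Type*) [NormedAddCommGroup X] [NormedSpace ℝ X]
    (r : ℝ) (p : ℝ) (hp : 1 < p)
    (ν : Measure ℝ) [IsFiniteMeasure ν] (hν : ν (Icc (-r) (0:ℝ))ᶜ = 0)
    (k : ℝ → X →L[ℝ] X) (hk : ∀ θ, ‖k θ‖ ≤ 1)
    (τ : ℝ)
    (u : ℝ → X) (hu : ContDiffOn ℝ 1 u (Icc 0 τ)) :
    ∫ t in Ioc 0 τ, ‖∫ θ, k θ (if -t ≤ θ then u (t + θ) else 0) ∂ν‖ ^ p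
      ≤ (ν (Icc (-τ) 0)).toReal ^ p * ∫ t in Ioc 0 τ, ‖u t‖ ^ p := by
  set S := Icc (-τ) (0 : ℝ)
  set C := ν.real S
  set G := (Icc 0 τ).indicator fun σ => ‖u σ‖ ^ p
  have hθ0 : ∀ᵐ θ ∂ν, θ ≤ 0 :=
    (show ∀ᵐ θ ∂ν, θ ∈ Icc (-r) 0 from ae_iff.2 hν).mono fun θ hθ => hθ.2
  have hup : ContinuousOn (fun σ => ‖u σ‖ ^ p) (Icc 0 τ) :=
    hu.continuousOn.norm.rpow_const fun _ _ => Or.inr (by linarith)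
  have hGm : StronglyMeasurable G :=
    (hup.measurable_indicator measurableSet_Icc).stronglyMeasurable
  have hGi : Integrable G := (integrable_indicator_iff measurableSet_Icc).2 hup.integrableOn_Icc
  have hinner0 : ∀ t, 0 ≤ C ^ (p - 1) * ∫ θ in S, G (t + θ) ∂ν := fun t =>
    mul_nonneg (by positivity) <| integral_nonneg fun θ =>
      indicator_nonneg (fun _ _ => by positivity) _
  have hinner : Integrable fun t => C ^ (p - 1) * ∫ θ in S, G (t + θ) ∂ν :=
    (integrable_prod_comp_add hGm hGi).integral_prod_left.const_mul _
  calc ∫ t in Ioc 0 τ, ‖∫ θ, k θ (history u t θ) ∂ν‖ ^ p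
      ≤ ∫ t in Ioc 0 τ, C ^ (p - 1) * ∫ θ in S, G (t + θ) ∂ν :=
        integral_mono_of_nonneg (ae_of_all _ fun t => by positivity) hinner.integrableOn <|
          (ae_restrict_mem measurableSet_Ioc).mono fun t ht =>
            norm_integral_history_rpow_le hθ0 hk hp hu.continuousOn ht.2
    _ ≤ ∫ t, C ^ (p - 1) * ∫ θ in S, G (t + θ) ∂ν :=
        setIntegral_le_integral hinner (ae_of_all _ hinner0)
    _ = C ^ p * ∫ t in Ioc 0 τ, ‖u t‖ ^ p := by
        rw [integral_const_mul, integral_integral_comp_add hGm hGi,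
          integral_indicator measurableSet_Icc, integral_Icc_eq_integral_Ioc,
          measureReal_restrict_apply_univ, smul_eq_mul, ← mul_assoc,
          ← Real.rpow_add_one' measureReal_nonneg (by linarith), sub_add_cancel]

/-- Let `Lφ = ∫_{-r}^0 dμ(θ) φ(θ)` be a Riemann–Stieltjes operator, modelled by
`Lφ = ∫ k θ (φ θ) dν(θ)` with `ν` the (finite) total variation measure `|μ|`
supported in `[-r,0]` and `‖k θ‖ ≤ 1`.  Then for every `τ > 0` and every
`u ∈ W^{2,p}([0,τ],X)` with `u(0) = 0` (here: `u` of class `C¹` with `u` in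
`L^p`), the input-output map `(𝔽u)(t) = L(Φ_t u)` satisfies
`∫_0^τ ‖(𝔽u)(t)‖^p dt ≤ (|μ|([-τ,0]))^p ∫_0^τ ‖u(σ)‖^p dσ`. -/
theorem input_output_estimate
    (X : Type*) [NormedAddCommGroup X] [NormedSpace ℝ X] [CompleteSpace X]
    (r : ℝ) (hr : 0 < r) (p : ℝ) (hp : 1 < p)
    (ν : Measure ℝ) [IsFiniteMeasure ν] (hν : ν (Icc (-r) (0:ℝ))ᶜ = 0)
    (k : ℝ → X →L[ℝ] X) (hk : ∀ θ, ‖k θ‖ ≤ 1)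
    (hkmeas : AEStronglyMeasurable k ν)
    (τ : ℝ) (hτ : 0 < τ)
    (u : ℝ → X) (hu : ContDiffOn ℝ 1 u (Icc 0 τ)) (hu0 : u 0 = 0)
    (hup : MemLp u (ENNReal.ofReal p) (volume.restrict (Icc 0 τ))) :
    ∫ t in Ioc 0 τ, ‖∫ θ, k θ (if -t ≤ θ then u (t + θ) else 0) ∂ν‖ ^ p
      ≤ (ν (Icc (-τ) 0)).toReal ^ p * ∫ t in Ioc 0 τ, ‖u t‖ ^ p :=
  input_output_estimate_general X r p hp ν hν k hk τ u hu
end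

section
/- Let A be closed with λ/(1+â(λ)) ∈ ρ(A) where â(λ) ≠ -1, and let L ∈ L(W^{1,p}([-r,0],X), X). Writing H(λ) = (λ - (1+â(λ))A)^{-1}, the factorization (λ - (1+â(λ))A) - L e_λ = (I - L e_λ H(λ))(λ - (1+â(λ))A) holds, and consequently λ ∈ ρ((1+â(λ))A + L e_λ) if and only if 1 ∈ ρ(L e_λ H(λ)). -/
open MeasureTheory Filter Set
open scoped ENNReal NNReal

/-- Let `A` be closed with `λ/(1+â(λ)) ∈ ρ(A)` (`â(λ) ≠ -1`), with
`H(λ) = (λ - (1+â(λ))A)⁻¹`, and `E = L e_λ ∈ L(X)`.  Then the factorization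
`(λ - (1+â(λ))A) - L e_λ = (I - L e_λ H(λ))(λ - (1+â(λ))A)` holds, and
`λ ∈ ρ((1+â(λ))A + L e_λ)` if and only if `1 ∈ ρ(L e_λ H(λ))`. -/
theorem spectral_factorization_integrodifferential
    (X : Type*) [NormedAddCommGroup X] [NormedSpace ℂ X] [CompleteSpace X]
    (Dom : Submodule ℂ X) (A : Dom →ₗ[ℂ] X)
    (hclosed : IsClosed {q : X × X | ∃ h : q.1 ∈ Dom, A ⟨q.1, h⟩ = q.2})
    (ahat : ℂ) (hahat : ahat ≠ -1) (lam : ℂ)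
    (H E : X →L[ℂ] X)
    (hHmem : ∀ y, H y ∈ Dom)
    (hH1 : ∀ y : X, lam • H y - (1 + ahat) • A ⟨H y, hHmem y⟩ = y)
    (hH2 : ∀ x : Dom, H (lam • (x : X) - (1 + ahat) • A x) = x) :
    (∀ x : Dom, (lam • (x : X) - (1 + ahat) • A x) - E x
        = (1 - E.comp H) (lam • (x : X) - (1 + ahat) • A x)) ∧
    ((∃ Rl : X →L[ℂ] X, ∃ hm : ∀ y, Rl y ∈ Dom,
        (∀ y : X, lam • Rl y - ((1 + ahat) • A ⟨Rl y, hm y⟩ + E (Rl y)) = y) ∧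
        (∀ x : Dom, Rl (lam • (x : X) - ((1 + ahat) • A x + E x)) = x)) ↔
      (∃ V : X →L[ℂ] X, V.comp (1 - E.comp H) = 1 ∧ (1 - E.comp H).comp V = 1)) := by
  have happ : ∀ y : X, (1 - E.comp H) y = y - E (H y) := by
    intro y
    simp [ContinuousLinearMap.sub_apply, ContinuousLinearMap.comp_apply]
  constructor
  · intro x
    rw [happ, hH2 x]
  constructor
  · rintro ⟨Rl, hm, h1, h2⟩
    refine ⟨1 + E.comp Rl, ?_, ?_⟩ <;> ext y
    · have hy : lam • H y - ((1 + ahat) • A ⟨H y, hHmem y⟩ + E (H y))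
          = y - E (H y) := by
        calc lam • H y - ((1 + ahat) • A ⟨H y, hHmem y⟩ + E (H y))
            = (lam • H y - (1 + ahat) • A ⟨H y, hHmem y⟩) - E (H y) := by abel
          _ = y - E (H y) := by rw [hH1]
      have key : Rl (y - E (H y)) = H y := by
        rw [← hy]; exact h2 ⟨H y, hHmem y⟩
      have step : ((1 + E.comp Rl).comp (1 - E.comp H)) y
          = (y - E (H y)) + E (Rl (y - E (H y))) := by
        rw [ContinuousLinearMap.comp_apply, ContinuousLinearMap.add_apply,
          ContinuousLinearMap.one_apply, ContinuousLinearMap.comp_apply, happ]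
      rw [step, key, ContinuousLinearMap.one_apply]
      abel
    · have hy : y + E (Rl y) = lam • Rl y - (1 + ahat) • A ⟨Rl y, hm y⟩ := by
        calc y + E (Rl y)
            = (lam • Rl y - ((1 + ahat) • A ⟨Rl y, hm y⟩ + E (Rl y))) + E (Rl y) := by
              rw [h1 y]
          _ = lam • Rl y - (1 + ahat) • A ⟨Rl y, hm y⟩ := by abel
      have key : H (y + E (Rl y)) = Rl y := by
        rw [hy]; exact hH2 ⟨Rl y, hm y⟩
      have step : ((1 - E.comp H).comp (1 + E.comp Rl)) y
          = (y + E (Rl y)) - E (H (y + E (Rl y))) := by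
        rw [ContinuousLinearMap.comp_apply, ContinuousLinearMap.add_apply,
          ContinuousLinearMap.one_apply, ContinuousLinearMap.comp_apply, happ]
      rw [step, key, ContinuousLinearMap.one_apply]
      abel
  · rintro ⟨V, hV1, hV2⟩
    refine ⟨H.comp V, fun y => hHmem _, ?_, ?_⟩
    · intro y
      have h2 : (1 - E.comp H) (V y) = y := by
        have := congrArg (fun f : X →L[ℂ] X => f y) hV2
        simpa [ContinuousLinearMap.comp_apply] using this
      rw [happ] at h2
      calc lam • H (V y) - ((1 + ahat) • A ⟨H (V y), hHmem _⟩ + E (H (V y)))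
          = (lam • H (V y) - (1 + ahat) • A ⟨H (V y), hHmem _⟩) - E (H (V y)) := by
            abel
        _ = V y - E (H (V y)) := by rw [hH1]
        _ = y := h2
    · intro x
      have hx : lam • (x : X) - ((1 + ahat) • A x + E x)
          = (1 - E.comp H) (lam • (x : X) - (1 + ahat) • A x) := by
        rw [happ, hH2 x]; abel
      have h2 : V ((1 - E.comp H) (lam • (x : X) - (1 + ahat) • A x))
          = lam • (x : X) - (1 + ahat) • A x := by
        have := congrArg (fun f : X →L[ℂ] X => f (lam • (x : X) - (1 + ahat) • A x)) hV1
        simpa [ContinuousLinearMap.comp_apply] using this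
      rw [ContinuousLinearMap.comp_apply, hx, h2, hH2 x]
end
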